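/- Let S be a family of linear subspaces of X with {0} ∈ S, let a ∈ X, a ≠ 0, and let τ_a : E_S(X) → E_S(X) be the homomorphism sending f to the limit of the translates f(· + ra), uniformly on compact sets, as r → +∞. Let χ_a : C(X̄) → ℂ be the character χ_a(f) = h_f(a/‖a‖), where h_f is the boundary function of f. Then the kernel of τ_a equals the norm closure in E_S(X) of the ideal generated by {g ∈ C(X̄) : χ_a(g) = 0}, i.e. ker τ_a is the closure of the set of finite sums Σ g_i f_i with g_i ∈ C(X̄), χ_a(g_i) = 0, and f_i ∈ E_S(X). -/

import Mathlib

open MeasureTheory Metric Filter Topology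

noncomputable section

/-- `X d` is the Euclidean space `ℝ^d` with its standard inner product and norm. -/
abbrev X (d : ℕ) : Type := EuclideanSpace ℝ (Fin d)

/-- `h` is a boundary function for `f` : `f` has uniform radial limits at infinity given
(on the unit sphere) by the continuous function `h`. -/
def IsBoundary {E : Type*} [NormedAddCommGroup E] [InnerProductSpace ℝ E]
    (f : E → ℂ) (h : E → ℂ) : Prop :=
  Continuous h ∧
    ∀ ε > 0, ∃ r > 0, ∀ z : E, r ≤ ‖z‖ → ‖f z - h (‖z‖⁻¹ • z)‖ < ε

/-- `f` has uniform radial limits at infinity. -/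
def HasUniformRadialLimits {E : Type*} [NormedAddCommGroup E] [InnerProductSpace ℝ E]
    (f : E → ℂ) : Prop :=
  ∃ h : E → ℂ, IsBoundary f h

/-- The generating set of the algebra `E_S(X)` : functions of the form `g ∘ π_Y` with `Y ∈ S`
and `g` a bounded continuous function on `Y^⊥` having uniform radial limits at infinity. -/
def projGen {E : Type*} [NormedAddCommGroup E] [InnerProductSpace ℝ E]
    [FiniteDimensional ℝ E] (S : Set (Submodule ℝ E)) :
    Set (BoundedContinuousFunction E ℂ) :=
  { f | ∃ Y ∈ S, ∃ g : BoundedContinuousFunction (↥Yᗮ) ℂ,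
      HasUniformRadialLimits ⇑g ∧ ∀ x : E, f x = g (Submodule.orthogonalProjection Yᗮ x) }

/-- `E_S(X)` : the smallest closed unital *-subalgebra of `C_b(X)` containing all `g ∘ π_Y`
with `Y ∈ S` and `g` having uniform radial limits at infinity. -/
def ES {E : Type*} [NormedAddCommGroup E] [InnerProductSpace ℝ E]
    [FiniteDimensional ℝ E] (S : Set (Submodule ℝ E)) :
    StarSubalgebra ℂ (BoundedContinuousFunction E ℂ) :=
  (StarAlgebra.adjoin ℂ (projGen S)).topologicalClosure

/-- The translates `x ↦ f(x + ra)` converge to `g` uniformly on compact subsets of `X`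
as `r → +∞`. -/
def TranslatesTendTo {d : ℕ} (a : X d) (f g : BoundedContinuousFunction (X d) ℂ) : Prop :=
  ∀ C : Set (X d), IsCompact C →
    TendstoUniformlyOn (fun (r : ℝ) (x : X d) => f (x + r • a)) (fun x => g x) atTop C

/-!
Translates of a function with boundary function `h` converge to the constant `h (a / ‖a‖)`, so
the generators of the ideal lie in `ker τ_a`, which is closed since `τ_a` is contractive.
Conversely, the closure `I` of the ideal is a `*`-ideal, so the `f` with `f - τ_a f ∈ I` form a
closed `*`-subalgebra, so it suffices to treat the generators `g ∘ π_Y`. If `π_Y a = 0` they are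
`τ_a`-invariant. Otherwise `g ∘ π_Y` tends to a constant `c` at infinity in every thin cone
around `a`, `τ_a (g ∘ π_Y) = c`, and `g ∘ π_Y - c` is approximated by `(1 - w) (g ∘ π_Y - c)`
with `w ∈ C(X̄)` a bump supported in such a cone and equal to `1` at infinity in direction `a`.
-/

open scoped BoundedContinuousFunction

section Direction

variable {α E : Type*} [NormedAddCommGroup E] [NormedSpace ℝ E]

def atTopInDirection (v : E) : Filter E :=
  comap norm atTop ⊓ comap (fun x => ‖x‖⁻¹ • x) (𝓝 (‖v‖⁻¹ • v))

theorem inv_norm_smul_smul_of_pos {t : ℝ} (ht : 0 < t) (v : E) :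
    ‖t • v‖⁻¹ • (t • v) = ‖v‖⁻¹ • v := by
  rw [norm_smul, Real.norm_of_nonneg ht.le, mul_inv, smul_smul, mul_right_comm,
    inv_mul_cancel₀ ht.ne', one_mul]

theorem norm_smul_inv_norm_smul (x : E) : ‖x‖ • ‖x‖⁻¹ • x = x := by
  rcases eq_or_ne x 0 with rfl | hx
  · simp
  · exact smul_inv_smul₀ (norm_ne_zero_iff.2 hx) x

theorem hasBasis_atTopInDirection (v : E) :
    (atTopInDirection v).HasBasis (fun p : ℝ × ℝ => 0 < p.1 ∧ 0 < p.2)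
      (fun p => {x | p.1 < ‖x‖ ∧ dist (‖x‖⁻¹ • x) (‖v‖⁻¹ • v) < p.2}) :=
  ((atTop_basis_Ioi' 0).comap norm).inf (Metric.nhds_basis_ball.comap _)

theorem Filter.Tendsto.smul_atTopInDirection {l : Filter α} {t : α → ℝ} {w : α → E} {v : E}
    (hv : v ≠ 0) (ht : Tendsto t l atTop) (hw : Tendsto w l (𝓝 v)) :
    Tendsto (fun i => t i • w i) l (atTopInDirection v) := by
  have hnorm : Tendsto (fun i => t i * ‖w i‖) l atTop :=
    ht.atTop_mul_pos (norm_pos_iff.2 hv) hw.norm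
  have hdir : Tendsto (fun i => ‖w i‖⁻¹ • w i) l (𝓝 (‖v‖⁻¹ • v)) :=
    (hw.norm.inv₀ (norm_ne_zero_iff.2 hv)).smul hw
  refine tendsto_inf.2 ⟨tendsto_comap_iff.2 ?_, tendsto_comap_iff.2 ?_⟩
  · refine hnorm.congr' ?_
    filter_upwards [ht.eventually_ge_atTop 0] with i hi
    simp [norm_smul, Real.norm_of_nonneg hi]
  · refine hdir.congr' ?_
    filter_upwards [ht.eventually_gt_atTop 0] with i hi
    exact (inv_norm_smul_smul_of_pos hi _).symm

theorem tendsto_add_smul_atTopInDirection (x : E) {v : E} (hv : v ≠ 0) :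
    Tendsto (fun r : ℝ => x + r • v) atTop (atTopInDirection v) := by
  have hw : Tendsto (fun r : ℝ => r⁻¹ • x + v) atTop (𝓝 v) := by
    simpa using ((tendsto_inv_atTop_zero (𝕜 := ℝ)).smul_const x).add_const v
  refine (tendsto_id.smul_atTopInDirection hv hw).congr' ?_
  filter_upwards [eventually_gt_atTop 0] with r hr
  simp [smul_add, smul_inv_smul₀ hr.ne']

variable {F : Type*} [NormedAddCommGroup F] [NormedSpace ℝ F]

theorem ContinuousLinearMap.tendsto_atTopInDirection (T : E →L[ℝ] F) {a : E} (hTa : T a ≠ 0) :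
    Tendsto T (atTopInDirection a) (atTopInDirection (T (‖a‖⁻¹ • a))) := by
  have ha : a ≠ 0 := fun h => hTa (by simp [h])
  have hnorm : Tendsto (fun x : E => ‖x‖) (atTopInDirection a) atTop :=
    tendsto_comap.mono_left inf_le_left
  have hdir : Tendsto (fun x : E => T (‖x‖⁻¹ • x)) (atTopInDirection a)
      (𝓝 (T (‖a‖⁻¹ • a))) :=
    (T.continuous.tendsto _).comp (tendsto_comap.mono_left inf_le_right)
  have hT : T (‖a‖⁻¹ • a) ≠ 0 := by
    simpa [ha] using hTa
  refine (hnorm.smul_atTopInDirection hT hdir).congr fun x => ?_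
  rw [← map_smul, norm_smul_inv_norm_smul]

end Direction

section Boundary

variable {E : Type*} [NormedAddCommGroup E] [InnerProductSpace ℝ E] {f h : E → ℂ}

theorem IsBoundary.tendsto_atTopInDirection (hfh : IsBoundary f h) (v : E) :
    Tendsto f (atTopInDirection v) (𝓝 (h (‖v‖⁻¹ • v))) := by
  have hradial : Tendsto (fun z => f z - h (‖z‖⁻¹ • z)) (comap norm atTop) (𝓝 0) := by
    refine Metric.tendsto_nhds.2 fun ε hε => ?_
    obtain ⟨r, -, hr⟩ := hfh.2 ε hε
    filter_upwards [(eventually_ge_atTop r).comap norm] with z hz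
    simpa [dist_eq_norm] using hr z hz
  have hangular : Tendsto (fun z => h (‖z‖⁻¹ • z))
      (comap (fun x => ‖x‖⁻¹ • x) (𝓝 (‖v‖⁻¹ • v))) (𝓝 (h (‖v‖⁻¹ • v))) :=
    (hfh.1.tendsto _).comp tendsto_comap
  simpa only [atTopInDirection, sub_add_cancel, zero_add] using
    (hradial.mono_left inf_le_left).add (hangular.mono_left inf_le_right)

theorem IsBoundary.star (hfh : IsBoundary f h) : IsBoundary (star f) (star h) := by
  refine ⟨hfh.1.star, fun ε hε => ?_⟩
  obtain ⟨r, hr, hest⟩ := hfh.2 ε hε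
  exact ⟨r, hr, fun z hz => by simpa [← map_sub] using hest z hz⟩

theorem IsBoundary.const_sub (hfh : IsBoundary f h) (c : ℂ) :
    IsBoundary (fun x => c - f x) (fun y => c - h y) := by
  refine ⟨continuous_const.sub hfh.1, fun ε hε => ?_⟩
  obtain ⟨r, hr, hest⟩ := hfh.2 ε hε
  exact ⟨r, hr, fun z hz => by simpa [norm_sub_rev] using hest z hz⟩

theorem exists_bump_atTopInDirection (v : E) {R δ : ℝ} (hR : 0 < R) (hδ : 0 < δ) :
    ∃ w : E →ᵇ ℂ, ∃ hw : E → ℂ, IsBoundary w hw ∧ hw (‖v‖⁻¹ • v) = 1 ∧ (∀ x, ‖w x‖ ≤ 1) ∧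
      Function.support w ⊆ {x | R < ‖x‖ ∧ dist (‖x‖⁻¹ • x) (‖v‖⁻¹ • v) < δ} := by
  set ρ : ℝ → ℝ := fun t => min 1 (max 0 (t - R))
  set σ : E → ℝ := fun y => max 0 (1 - dist y (‖v‖⁻¹ • v) / δ)
  set q : E → ℝ := fun x => ρ ‖x‖ * σ (‖x‖⁻¹ • x)
  have hρ : Continuous ρ := by fun_prop
  have hσ : Continuous σ := by fun_prop
  have hρ_zero : ∀ t ≤ R, ρ t = 0 := fun t ht => by simp [ρ, ht]
  have hq : Continuous q := by
    refine continuous_iff_continuousAt.2 fun x₀ => ?_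
    rcases lt_or_ge ‖x₀‖ R with hx₀ | hx₀
    · -- `q` vanishes on the ball of radius `R`, which contains the discontinuity of `x / ‖x‖`
      refine (continuousAt_const (y := (0 : ℝ))).congr ?_
      filter_upwards [(continuous_norm.tendsto x₀).eventually (gt_mem_nhds hx₀)] with x hx
      simp [q, hρ_zero _ hx.le]
    · have hx₀' : x₀ ≠ 0 := by rintro rfl; simp at hx₀; linarith
      exact (hρ.continuousAt.comp continuous_norm.continuousAt).mul (hσ.continuousAt.comp
        ((continuous_norm.continuousAt.inv₀ (norm_ne_zero_iff.2 hx₀')).smul continuousAt_id))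
  have hq_mem : ∀ x, q x ∈ Set.Icc (0 : ℝ) 1 := fun x => by
    refine ⟨mul_nonneg (by positivity) (by positivity), mul_le_one₀ (min_le_left _ _)
      (le_max_left _ _) (max_le zero_le_one ?_)⟩
    linarith [div_nonneg dist_nonneg hδ.le (a := dist (‖x‖⁻¹ • x) (‖v‖⁻¹ • v))]
  have hq_norm : ∀ x, ‖(q x : ℂ)‖ ≤ 1 := fun x => by
    rw [Complex.norm_real, Real.norm_of_nonneg (hq_mem x).1]; exact (hq_mem x).2
  refine ⟨.ofNormedAddCommGroup (fun x => (q x : ℂ)) (by fun_prop) 1 hq_norm,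
    fun y => (σ y : ℂ), ⟨by fun_prop, fun ε hε => ⟨R + 1, by linarith, fun z hz => ?_⟩⟩,
    by simp [σ], hq_norm, fun x hx => ?_⟩
  · have : ρ ‖z‖ = 1 := by
      simp only [ρ]; rw [max_eq_right (by linarith), min_eq_left (by linarith)]
    simpa [q, this] using hε
  · have hqx : q x ≠ 0 := by simpa using hx
    have hρx : ρ ‖x‖ ≠ 0 := left_ne_zero_of_mul hqx
    have hσx : σ (‖x‖⁻¹ • x) ≠ 0 := right_ne_zero_of_mul hqx
    refine ⟨lt_of_not_ge fun h => hρx (hρ_zero _ h), ?_⟩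
    by_contra! hfar
    exact hσx (max_eq_left (by rwa [sub_nonpos, one_le_div hδ]))

end Boundary

section BoundaryIdeal

variable {E : Type*} [NormedAddCommGroup E] [InnerProductSpace ℝ E] [FiniteDimensional ℝ E]
  {S : Set (Submodule ℝ E)}

theorem projGen_subset_ES : projGen S ⊆ ES S :=
  (StarAlgebra.subset_adjoin ℂ _).trans (StarSubalgebra.le_topologicalClosure _)

theorem isClosed_ES : IsClosed (ES S : Set (E →ᵇ ℂ)) :=
  StarSubalgebra.isClosed_topologicalClosure _

theorem mem_ES_of_hasUniformRadialLimits (h0 : (⊥ : Submodule ℝ E) ∈ S) {w : E →ᵇ ℂ}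
    (hw : HasUniformRadialLimits w) : w ∈ ES S := by
  refine projGen_subset_ES ?_
  obtain ⟨h, hc, hest⟩ := hw
  refine ⟨⊥, h0, w.compContinuous ⟨Subtype.val, continuous_subtype_val⟩,
    ⟨fun z => h z, hc.comp continuous_subtype_val, fun ε hε => ?_⟩, fun x => ?_⟩
  · obtain ⟨r, hr, hre⟩ := hest ε hε
    exact ⟨r, hr, fun z hz => by simpa using hre z hz⟩
  · simp [Submodule.starProjection_top]

variable (S) in
/-- The ideal of `E_S(X)` generated by the `g ∈ C(X̄)` with `χ_a(g) = h_g(a/‖a‖) = 0`. -/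
def boundaryIdeal (a : E) : Ideal (ES S) :=
  Ideal.span {g | ∃ h, IsBoundary ⇑(g : E →ᵇ ℂ) h ∧ h (‖a‖⁻¹ • a) = 0}

theorem coe_boundaryIdeal (a : E) :
    (boundaryIdeal S a : Set (ES S)) = {f | ∃ (m : ℕ) (g u : Fin m → ES S),
      (∀ i, ∃ h : E → ℂ, IsBoundary ⇑(g i : E →ᵇ ℂ) h ∧ h (‖a‖⁻¹ • a) = 0) ∧
      f = ∑ i, g i * u i} := by
  ext f
  change f ∈ Submodule.span _ _ ↔ _
  rw [Submodule.mem_span_set']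
  constructor
  · rintro ⟨m, u, g, rfl⟩
    exact ⟨m, fun i => g i, u, fun i => (g i).2, by simp [smul_eq_mul, mul_comm]⟩
  · rintro ⟨m, g, u, hg, rfl⟩
    exact ⟨m, u, fun i => ⟨g i, hg i⟩, by simp [smul_eq_mul, mul_comm]⟩

theorem star_mem_boundaryIdeal {a : E} {f : ES S} (hf : f ∈ boundaryIdeal S a) :
    star f ∈ boundaryIdeal S a := by
  induction hf using Submodule.span_induction with
  | mem g hg =>
    obtain ⟨h, hgh, hha⟩ := hg
    exact Ideal.subset_span ⟨star h, by simpa using hgh.star, by simp [hha]⟩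
  | zero => simp
  | add x y _ _ hx hy => simpa using add_mem hx hy
  | smul r x _ hx => simpa [mul_comm] using Ideal.mul_mem_right (star r) _ hx

theorem star_mem_closure_boundaryIdeal {a : E} {f : ES S}
    (hf : f ∈ closure (boundaryIdeal S a : Set (ES S))) :
    star f ∈ closure (boundaryIdeal S a : Set (ES S)) :=
  map_mem_closure continuous_star hf fun _ => star_mem_boundaryIdeal

theorem sub_algebraMap_mem_closure_boundaryIdeal (h0 : (⊥ : Submodule ℝ E) ∈ S) {a : E}
    {u : ES S} {c : ℂ} (hu : Tendsto (u : E →ᵇ ℂ) (atTopInDirection a) (𝓝 c)) :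
    u - algebraMap ℂ (ES S) c ∈ closure (boundaryIdeal S a : Set (ES S)) := by
  refine Metric.mem_closure_iff.2 fun ε hε => ?_
  obtain ⟨⟨R, δ⟩, ⟨hR, hδ⟩, hcone⟩ := (hasBasis_atTopInDirection a).tendsto_left_iff.1 hu _
    (Metric.closedBall_mem_nhds c (half_pos hε))
  obtain ⟨w, hw, hwh, hwa, hw_le, hw_supp⟩ := exists_bump_atTopInDirection a hR hδ
  set W : ES S := ⟨w, mem_ES_of_hasUniformRadialLimits h0 ⟨hw, hwh⟩⟩
  have hW : 1 - W ∈ boundaryIdeal S a :=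
    Ideal.subset_span ⟨_, by convert hwh.const_sub 1 using 1; ext; simp [W], by simp [hwa]⟩
  -- `W` is supported in a cone where `u` is within `ε / 2` of `c`
  have hsmall : ‖W * (u - algebraMap ℂ (ES S) c)‖ ≤ ε / 2 := by
    refine (BoundedContinuousFunction.norm_le (half_pos hε).le).2 fun x => ?_
    by_cases hx : w x = 0
    · simpa [W, hx] using (half_pos hε).le
    · have hux : ‖(u : E →ᵇ ℂ) x - c‖ ≤ ε / 2 := by
        simpa [dist_eq_norm] using hcone (hw_supp hx)
      simpa [W, norm_mul] using mul_le_mul (hw_le x) hux (norm_nonneg _) zero_le_one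
  refine ⟨(1 - W) * (u - algebraMap ℂ (ES S) c), Ideal.mul_mem_right _ _ hW, ?_⟩
  rw [dist_eq_norm, ← one_sub_mul, sub_sub_cancel]
  linarith

end BoundaryIdeal

section FixedModIdeal

variable {R A : Type*} [CommSemiring R] [StarRing R] [CommRing A] [StarRing A] [Algebra R A]
  [StarModule R A]

def StarAlgHom.fixedModIdeal (τ : A →⋆ₐ[R] A) (I : Ideal A) (hI : ∀ x ∈ I, star x ∈ I) :
    StarSubalgebra R A where
  carrier := {f | f - τ f ∈ I}
  mul_mem' {f g} hf hg := by
    have : f * g - τ (f * g) = (f - τ f) * g + τ f * (g - τ g) := by rw [map_mul]; ring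
    rw [Set.mem_ofPred_eq, this]
    exact I.add_mem (I.mul_mem_right _ hf) (I.mul_mem_left _ hg)
  add_mem' {f g} hf hg := by
    rw [Set.mem_ofPred_eq, map_add, add_sub_add_comm]
    exact I.add_mem hf hg
  algebraMap_mem' r := by simp [AlgHomClass.commutes]
  star_mem' {f} hf := by
    rw [Set.mem_ofPred_eq, map_star, ← star_sub]
    exact hI _ hf

theorem StarAlgHom.mem_fixedModIdeal {τ : A →⋆ₐ[R] A} {I : Ideal A} {hI : ∀ x ∈ I, star x ∈ I}
    {f : A} : f ∈ τ.fixedModIdeal I hI ↔ f - τ f ∈ I :=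
  Iff.rfl

theorem StarAlgHom.isClosed_fixedModIdeal [TopologicalSpace A] [IsTopologicalRing A]
    (τ : A →⋆ₐ[R] A) (hτ : Continuous τ) {I : Ideal A} (hI : ∀ x ∈ I, star x ∈ I)
    (hIc : IsClosed (I : Set A)) : IsClosed (τ.fixedModIdeal I hI : Set A) :=
  hIc.preimage (continuous_id.sub hτ)

end FixedModIdeal

section Translation

variable {d : ℕ} {a : X d} {f g : X d →ᵇ ℂ}

theorem TranslatesTendTo.tendsto_apply (hfg : TranslatesTendTo a f g) (x : X d) :
    Tendsto (fun r : ℝ => f (x + r • a)) atTop (𝓝 (g x)) :=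
  (hfg {x} isCompact_singleton).tendsto_at rfl

theorem TranslatesTendTo.norm_le (hfg : TranslatesTendTo a f g) : ‖g‖ ≤ ‖f‖ :=
  (BoundedContinuousFunction.norm_le (norm_nonneg f)).2 fun x =>
    le_of_tendsto' (hfg.tendsto_apply x).norm fun _ => f.norm_coe_le_norm _

theorem TranslatesTendTo.apply_eq_of_tendsto (hfg : TranslatesTendTo a f g) (ha : a ≠ 0)
    {c : ℂ} (hf : Tendsto f (atTopInDirection a) (𝓝 c)) (x : X d) : g x = c :=
  tendsto_nhds_unique (hfg.tendsto_apply x) (hf.comp (tendsto_add_smul_atTopInDirection x ha))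

theorem TranslatesTendTo.eq_of_forall_add_smul_eq (hfg : TranslatesTendTo a f g)
    (hf : ∀ x (r : ℝ), f (x + r • a) = f x) : g = f :=
  BoundedContinuousFunction.ext fun x =>
    tendsto_nhds_unique (hfg.tendsto_apply x) (by simp only [hf]; exact tendsto_const_nhds)

end Translation

section Kernel

variable {d : ℕ} {S : Set (Submodule ℝ (X d))} {a : X d}

theorem continuous_of_translatesTendTo (τ : ES S →⋆ₐ[ℂ] ES S)
    (hτ : ∀ f : ES S, TranslatesTendTo a f (τ f)) : Continuous τ :=
  AddMonoidHomClass.continuous_of_bound τ 1 fun f => by simpa using (hτ f).norm_le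

theorem boundaryIdeal_le_ker (ha : a ≠ 0) (τ : ES S →⋆ₐ[ℂ] ES S)
    (hτ : ∀ f : ES S, TranslatesTendTo a f (τ f)) : boundaryIdeal S a ≤ RingHom.ker τ :=
  Ideal.span_le.2 fun g ⟨_, hgh, hha⟩ => RingHom.mem_ker.2 <| Subtype.ext <|
    BoundedContinuousFunction.ext fun x => by
      simpa [hha] using (hτ g).apply_eq_of_tendsto ha (hgh.tendsto_atTopInDirection a) x

theorem sub_tau_mem_closure_boundaryIdeal_of_mem_projGen (h0 : (⊥ : Submodule ℝ (X d)) ∈ S)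
    (ha : a ≠ 0) (τ : ES S →⋆ₐ[ℂ] ES S) (hτ : ∀ f : ES S, TranslatesTendTo a f (τ f))
    {u : X d →ᵇ ℂ} (hu : u ∈ projGen S) :
    ⟨u, projGen_subset_ES hu⟩ - τ ⟨u, projGen_subset_ES hu⟩ ∈
      closure (boundaryIdeal S a : Set (ES S)) := by
  set huS := projGen_subset_ES hu
  obtain ⟨Y, -, g, ⟨h, hgh⟩, hug⟩ := hu
  set π := (Yᗮ).orthogonalProjectionOnto
  by_cases hπa : π a = 0
  · have hfix : τ ⟨u, huS⟩ = ⟨u, huS⟩ := Subtype.ext <| (hτ _).eq_of_forall_add_smul_eq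
      fun x r => by simp [hug, π, hπa]
    rw [hfix, sub_self]
    exact subset_closure (zero_mem _)
  · set c := h (‖π (‖a‖⁻¹ • a)‖⁻¹ • π (‖a‖⁻¹ • a))
    have hlim : Tendsto u (atTopInDirection a) (𝓝 c) := by
      rw [show ⇑u = g ∘ π from funext hug]
      exact (hgh.tendsto_atTopInDirection _).comp (π.tendsto_atTopInDirection hπa)
    have hτu : τ ⟨u, huS⟩ = algebraMap ℂ (ES S) c := Subtype.ext <|
      BoundedContinuousFunction.ext fun x => by
        simpa using (hτ ⟨u, huS⟩).apply_eq_of_tendsto ha hlim x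
    rw [hτu]
    exact sub_algebraMap_mem_closure_boundaryIdeal h0 hlim

theorem sub_tau_mem_closure_boundaryIdeal (h0 : (⊥ : Submodule ℝ (X d)) ∈ S) (ha : a ≠ 0)
    (τ : ES S →⋆ₐ[ℂ] ES S) (hτ : ∀ f : ES S, TranslatesTendTo a f (τ f)) (f : ES S) :
    f - τ f ∈ closure (boundaryIdeal S a : Set (ES S)) := by
  have hstar : ∀ x ∈ (boundaryIdeal S a).closure, star x ∈ (boundaryIdeal S a).closure := by
    simp only [← SetLike.mem_coe, Ideal.coe_closure]
    exact fun x => star_mem_closure_boundaryIdeal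
  set B := τ.fixedModIdeal _ hstar
  have hB : IsClosed (B.map (ES S).subtype : Set (X d →ᵇ ℂ)) := by
    rw [StarSubalgebra.coe_map]
    exact isClosed_ES.isClosedEmbedding_subtypeVal.isClosedMap _
      (τ.isClosed_fixedModIdeal (continuous_of_translatesTendTo τ hτ) hstar
        (by rw [Ideal.coe_closure]; exact isClosed_closure))
  have hgen : projGen S ⊆ B.map (ES S).subtype := fun u hu =>
    ⟨⟨u, projGen_subset_ES hu⟩, StarAlgHom.mem_fixedModIdeal.2 <| by
      rw [← SetLike.mem_coe, Ideal.coe_closure]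
      exact sub_tau_mem_closure_boundaryIdeal_of_mem_projGen h0 ha τ hτ hu, rfl⟩
  obtain ⟨g, hg, hgf⟩ :=
    StarSubalgebra.topologicalClosure_minimal (StarAlgebra.adjoin_le hgen) hB f.2
  obtain rfl : g = f := Subtype.ext hgf
  rw [← Ideal.coe_closure]
  exact StarAlgHom.mem_fixedModIdeal.1 hg

end Kernel

theorem ker_tau_eq_closure_ideal_general (d : ℕ) (S : Set (Submodule ℝ (X d)))
    (h0 : (⊥ : Submodule ℝ (X d)) ∈ S) (a : X d) (ha : a ≠ 0)
    (τ : ↥(ES S) →⋆ₐ[ℂ] ↥(ES S))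
    (hτ : ∀ f : ↥(ES S), TranslatesTendTo a (↑f) (↑(τ f))) :
    {f : ↥(ES S) | τ f = 0} =
      closure {f : ↥(ES S) | ∃ (m : ℕ) (g u : Fin m → ↥(ES S)),
        (∀ i, ∃ h : X d → ℂ,
          IsBoundary (⇑(g i : BoundedContinuousFunction (X d) ℂ)) h ∧ h (‖a‖⁻¹ • a) = 0) ∧
        f = ∑ i, g i * u i} := by
  rw [← coe_boundaryIdeal]
  refine Set.Subset.antisymm (fun f hf => ?_) ?_
  · have hfτ := sub_tau_mem_closure_boundaryIdeal h0 ha τ hτ f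
    rwa [show τ f = 0 from hf, sub_zero] at hfτ
  · exact closure_minimal (boundaryIdeal_le_ker ha τ hτ)
      (isClosed_singleton.preimage (continuous_of_translatesTendTo τ hτ))

/-- Let `S` be a family of subspaces of `X` with `{0} ∈ S`, `a ≠ 0`, and let
`τ = τ_a : E_S(X) → E_S(X)` be the homomorphism sending `f` to the limit of its translates
`f(· + ra)` (uniformly on compact sets, as `r → +∞`). Then `ker τ_a` equals the norm closure
in `E_S(X)` of the ideal generated by `{g ∈ C(X̄) : χ_a(g) = 0}`, i.e. the closure of the set
of finite sums `Σ gᵢ fᵢ` with `gᵢ ∈ C(X̄)`, `χ_a(gᵢ) = h_{gᵢ}(a/‖a‖) = 0`, and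
`fᵢ ∈ E_S(X)`. -/
theorem ker_tau_eq_closure_ideal (d : ℕ) (hd : 1 ≤ d) (S : Set (Submodule ℝ (X d)))
    (h0 : (⊥ : Submodule ℝ (X d)) ∈ S) (a : X d) (ha : a ≠ 0)
    (τ : ↥(ES S) →⋆ₐ[ℂ] ↥(ES S))
    (hτ : ∀ f : ↥(ES S), TranslatesTendTo a (↑f) (↑(τ f))) :
    {f : ↥(ES S) | τ f = 0} =
      closure {f : ↥(ES S) | ∃ (m : ℕ) (g u : Fin m → ↥(ES S)),
        (∀ i, ∃ h : X d → ℂ,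
          IsBoundary (⇑(g i : BoundedContinuousFunction (X d) ℂ)) h ∧ h (‖a‖⁻¹ • a) = 0) ∧
        f = ∑ i, g i * u i} :=
  ker_tau_eq_closure_ideal_general d S h0 a ha τ hτ
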